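/- For every $n \in \mathbb{N}$ and every $k, t \in \mathbb{N}_+$ with $k \ge 2$, the non-partite extremal number satisfies $\mathrm{ex}(n, K^{(k)}_{t,\ldots,t}) \le \frac{2 n^{k - 1/t^{k-1}}}{(k-1)!}$; and for $k=1$, $\mathrm{ex}(n, K^{(1)}_t) \le t - 1$. -/

import Mathlib

/-- A `k`-uniform hypergraph on `[n]` contains a (non-induced) copy of the complete
`k`-partite hypergraph with `t` vertices per part. -/
def HasNonpartiteCopy (n k t : ℕ) (E : Finset (Finset (Fin n))) : Prop :=
  ∃ v : Fin k → Fin t → Fin n,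
    Function.Injective (fun p : Fin k × Fin t => v p.1 p.2) ∧
    ∀ f : Fin k → Fin t, (Finset.univ.image fun i => v i (f i)) ∈ E

/-- The non-partite extremal number `ex(n, K^{(k)}_{t,…,t})`. -/
noncomputable def exNonpartite (n k t : ℕ) : ℕ :=
  sSup {c | ∃ E : Finset (Finset (Fin n)), (∀ e ∈ E, e.card = k) ∧
    ¬ HasNonpartiteCopy n k t E ∧ c = E.card}

/-!
Induction on `k` through links. For a `k`-set `S` let `d S` be the number of vertices `v ∉ S`
with `S ∪ {v} ∈ E`, so that `∑ d S = (k + 1) |E|`. For an injective `t`-tuple `w`, the `k`-sets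
`S` with `S ∪ {w j} ∈ E` for every `j` form a `k`-graph without `K^{(k)}_{t,…,t}`: adjoining `w`
as a new part to a copy in it would give a copy in `E`. Counting pairs `(S, w)` therefore gives
`∑ (d S)_t ≤ n^t · ex(n, K^{(k)}_{t,…,t})`, and Jensen's inequality for `(d - t + 1)^t ≤ (d)_t`
turns this into a bound on `∑ d S`. The case `k = 1` is the same count one level down, where a
`0`-graph without a copy is empty.
-/

open Finset

section Link

variable {α : Type*} [Fintype α] [DecidableEq α]

def linkVertices (E : Finset (Finset α)) (S : Finset α) : Finset α :=
  {v | v ∉ S ∧ insert v S ∈ E}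

def commonLink (E : Finset (Finset α)) (k : ℕ) {t : ℕ} (w : Fin t ↪ α) : Finset (Finset α) :=
  {S ∈ powersetCard k univ | ∀ j, w j ∈ linkVertices E S}

lemma sum_card_linkVertices {E : Finset (Finset α)} {k : ℕ} (hE : ∀ e ∈ E, #e = k + 1) :
    ∑ S ∈ powersetCard k univ, #(linkVertices E S) = (k + 1) * #E := by
  rw [← card_sigma, mul_comm, ← sum_const_nat hE, ← card_sigma E (fun e => e)]
  refine card_nbij' (fun p => ⟨insert p.2 p.1, p.2⟩) (fun p => ⟨p.1.erase p.2, p.2⟩) ?_ ?_ ?_ ?_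
  · rintro ⟨S, v⟩ h
    simp only [coe_sigma, Set.mem_sigma_iff, mem_coe, linkVertices, mem_filter, mem_univ,
      true_and] at h ⊢
    exact ⟨h.2.2, mem_insert_self _ _⟩
  · rintro ⟨e, v⟩ h
    simp only [coe_sigma, Set.mem_sigma_iff, mem_coe, linkVertices, mem_filter, mem_univ,
      true_and, mem_powersetCard, subset_univ] at h ⊢
    refine ⟨by rw [card_erase_of_mem h.2, hE e h.1]; rfl, notMem_erase _ _, ?_⟩
    rw [insert_erase h.2]
    exact h.1
  · rintro ⟨S, v⟩ h
    simp only [coe_sigma, Set.mem_sigma_iff, mem_coe, linkVertices, mem_filter, mem_univ,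
      true_and] at h
    simp [erase_insert h.2.1]
  · rintro ⟨e, v⟩ h
    simp only [coe_sigma, Set.mem_sigma_iff, mem_coe] at h
    simp [insert_erase h.2]

lemma card_filter_embedding_forall_mem (s : Finset α) (t : ℕ) :
    #{w : Fin t ↪ α | ∀ j, w j ∈ s} = (#s).descFactorial t := by
  have : (#s).descFactorial t = Fintype.card (Fin t ↪ s) := by
    rw [Fintype.card_embedding_eq, Fintype.card_coe, Fintype.card_fin]
  rw [this, ← card_univ]
  refine card_bij' (fun w hw => Function.Embedding.codRestrict (s : Set α) w (by simpa using hw))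
    (fun w _ => w.trans (Function.Embedding.subtype _)) (by simp) (by simp) ?_ ?_
  · intro w _; rfl
  · intro w _; rfl

lemma sum_descFactorial_card_linkVertices (E : Finset (Finset α)) (k t : ℕ) :
    ∑ S ∈ powersetCard k univ, (#(linkVertices E S)).descFactorial t =
      ∑ w : Fin t ↪ α, #(commonLink E k w) := by
  simp_rw [← card_filter_embedding_forall_mem]
  exact sum_card_bipartiteAbove_eq_sum_card_bipartiteBelow _

end Link

lemma not_hasNonpartiteCopy_commonLink {n k t : ℕ} {E : Finset (Finset (Fin n))}
    (hE : ¬ HasNonpartiteCopy n (k + 1) t E) (w : Fin t ↪ Fin n) :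
    ¬ HasNonpartiteCopy n k t (commonLink E k w) := by
  rintro ⟨v, hv, hvE⟩
  have hlink : ∀ f : Fin k → Fin t, ∀ j,
      w j ∉ univ.image (fun i => v i (f i)) ∧ insert (w j) (univ.image fun i => v i (f i)) ∈ E :=
    fun f j => by simpa [commonLink, linkVertices] using ((mem_filter.1 (hvE f)).2 j)
  have hdisj : ∀ i j j', v i j ≠ w j' := by
    rintro i j j' h
    exact (hlink (fun _ => j) j').1 (h ▸ mem_image_of_mem _ (mem_univ i))
  refine hE ⟨Fin.cons w v, ?_, fun f => ?_⟩
  · rintro ⟨i₁, j₁⟩ ⟨i₂, j₂⟩ h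
    induction i₁ using Fin.cases <;> induction i₂ using Fin.cases <;>
      simp only [Fin.cons_zero, Fin.cons_succ] at h
    · simp [w.injective h]
    · exact absurd h.symm (hdisj _ _ _)
    · exact absurd h (hdisj _ _ _)
    · simpa using @hv (_, j₁) (_, j₂) h
  · convert (hlink (fun i => f i.succ) (f 0)).2 using 1
    ext x
    simp [Fin.exists_fin_succ, eq_comm]

lemma eq_empty_of_not_hasNonpartiteCopy_zero {n t : ℕ} {H : Finset (Finset (Fin n))}
    (hH : ∀ S ∈ H, #S = 0) (hc : ¬ HasNonpartiteCopy n 0 t H) : H = ∅ := by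
  refine eq_empty_of_forall_notMem fun S hS => hc ⟨Fin.elim0, fun p => p.1.elim0, fun f => ?_⟩
  rwa [univ_eq_empty, image_empty, ← card_eq_zero.1 (hH S hS)]

lemma card_lt_of_not_hasNonpartiteCopy_one {n t : ℕ} {E : Finset (Finset (Fin n))}
    (hE : ∀ e ∈ E, #e = 1) (hc : ¬ HasNonpartiteCopy n 1 t E) : #E < t := by
  have hdeg : #(linkVertices E ∅) = #E := by
    simpa using sum_card_linkVertices (k := 0) hE
  have hzero : (#E).descFactorial t = 0 := by
    rw [← hdeg, ← sum_singleton (fun S => (#(linkVertices E S)).descFactorial t) ∅,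
      ← powersetCard_zero univ, sum_descFactorial_card_linkVertices]
    refine sum_eq_zero fun w _ => card_eq_zero.2 ?_
    refine eq_empty_of_not_hasNonpartiteCopy_zero (fun S hS => ?_)
      (not_hasNonpartiteCopy_commonLink hc w)
    exact (mem_powersetCard.1 (mem_filter.1 hS).1).2
  exact Nat.descFactorial_eq_zero_iff_lt.1 hzero

lemma sum_le_of_sum_descFactorial_le {ι : Type*} (s : Finset ι) (d : ι → ℕ) {t : ℕ} (ht : t ≠ 0)
    {Y : ℝ} (hY : 0 ≤ Y) (h : (#s : ℝ) ^ (t - 1) * ∑ i ∈ s, ((d i).descFactorial t : ℝ) ≤ Y ^ t) :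
    ∑ i ∈ s, (d i : ℝ) ≤ ((t : ℝ) - 1) * #s + Y := by
  obtain ⟨m, rfl⟩ : ∃ m, t = m + 1 := ⟨t - 1, by omega⟩
  set c : ι → ℝ := fun i => ((d i + 1 - (m + 1) : ℕ) : ℝ) with hc_def
  have hc : ∑ i ∈ s, c i ≤ Y := by
    refine le_of_pow_le_pow_left₀ ht hY ?_
    calc (∑ i ∈ s, c i) ^ (m + 1) ≤ (#s : ℝ) ^ m * ∑ i ∈ s, c i ^ (m + 1) :=
          pow_sum_le_card_mul_sum_pow (fun _ _ => by positivity) m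
      _ ≤ (#s : ℝ) ^ m * ∑ i ∈ s, ((d i).descFactorial (m + 1) : ℝ) := by
          gcongr with i
          simp only [hc_def]
          exact_mod_cast Nat.pow_sub_le_descFactorial (d i) (m + 1)
      _ ≤ Y ^ (m + 1) := by simpa using h
  calc ∑ i ∈ s, (d i : ℝ) ≤ ∑ i ∈ s, ((m : ℝ) + c i) := by
        gcongr with i
        simp only [hc_def]
        exact_mod_cast (by omega : d i ≤ m + (d i + 1 - (m + 1)))
    _ = (((m + 1 : ℕ) : ℝ) - 1) * #s + ∑ i ∈ s, c i := by
        rw [sum_add_distrib, sum_const, nsmul_eq_mul]; push_cast; ring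
    _ ≤ _ := by gcongr

noncomputable def kstBound (n k t : ℕ) : ℝ :=
  2 * (n : ℝ) ^ ((k : ℝ) - 1 / (t : ℝ) ^ (k - 1)) / (Nat.factorial (k - 1) : ℝ)

lemma kstBound_nonneg (n k t : ℕ) : 0 ≤ kstBound n k t := by
  unfold kstBound; positivity

lemma kstBound_succ {n : ℕ} (hn : 0 < n) (k t : ℕ) :
    kstBound n (k + 1) t = 2 * (n : ℝ) ^ (k + 1) / ((n : ℝ) ^ (1 / (t : ℝ) ^ k) * k.factorial) := by
  rw [kstBound, Nat.add_sub_cancel, Real.rpow_sub (by positivity), Real.rpow_natCast]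
  ring

lemma sub_one_le_rpow_one_sub {x δ : ℝ} {t : ℕ} (hx : 0 ≤ x) (hδ : 0 < δ) (hδt : δ * t ≤ 1)
    (h2 : 2 ≤ x ^ δ) : (t : ℝ) - 1 ≤ x ^ (1 - δ) := by
  rcases t with _ | s
  · push_cast
    linarith [Real.rpow_nonneg hx (1 - δ)]
  have hs : (s : ℝ) ≤ (1 - δ) / δ := by
    rw [le_div_iff₀ hδ]; push_cast at hδt; linarith
  calc ((s + 1 : ℕ) : ℝ) - 1 = s := by push_cast; ring
    _ ≤ (2 : ℝ) ^ s := by exact_mod_cast (Nat.lt_two_pow_self (n := s)).le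
    _ = (2 : ℝ) ^ (s : ℝ) := (Real.rpow_natCast 2 s).symm
    _ ≤ (2 : ℝ) ^ ((1 - δ) / δ) := Real.rpow_le_rpow_of_exponent_le (by norm_num) hs
    _ ≤ (x ^ δ) ^ ((1 - δ) / δ) := Real.rpow_le_rpow (by norm_num) h2 (by linarith)
    _ = x ^ (1 - δ) := by rw [← Real.rpow_mul hx, mul_div_cancel₀ _ hδ.ne']

lemma choose_pow_mul_kstBound_le {n k t : ℕ} (hn : 0 < n) (hk : 1 ≤ k) (ht : t ≠ 0) :
    (n.choose k : ℝ) ^ (t - 1) * ((n : ℝ) ^ t * ((2 * k) ^ (t - 1) * kstBound n k t)) ≤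
      (k * kstBound n (k + 1) t) ^ t := by
  obtain ⟨j, rfl⟩ : ∃ j, k = j + 1 := ⟨k - 1, by omega⟩
  obtain ⟨s, rfl⟩ : ∃ s, t = s + 1 := ⟨t - 1, by omega⟩
  have hu : (n : ℝ) ^ (1 / ((s + 1 : ℕ) : ℝ) ^ j) =
      ((n : ℝ) ^ (1 / ((s + 1 : ℕ) : ℝ) ^ (j + 1))) ^ (s + 1) := by
    rw [← Real.rpow_mul_natCast (by positivity)]
    congr 1
    field_simp
    ring
  rw [kstBound_succ hn, kstBound_succ hn, hu, Nat.add_sub_cancel]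
  set u := (n : ℝ) ^ (1 / ((s + 1 : ℕ) : ℝ) ^ (j + 1))
  calc _ ≤ ((n : ℝ) ^ (j + 1) / (j + 1).factorial) ^ s *
        ((n : ℝ) ^ (s + 1) * ((2 * ((j + 1 : ℕ) : ℝ)) ^ s *
          (2 * (n : ℝ) ^ (j + 1) / (u ^ (s + 1) * j.factorial)))) := by
        gcongr
        exact Nat.choose_le_pow_div _ _
    _ = _ := by
        rw [Nat.factorial_succ]
        push_cast
        simp only [div_pow, mul_pow]
        field_simp
        ring

lemma le_kstBound_of_le_choose {n k t : ℕ} (hn : 0 < n) (hk : 1 ≤ k) (ht : t ≠ 0) {e : ℝ}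
    (hchoose : e ≤ n.choose (k + 1))
    (hlink : (k + 1) * e ≤ ((t : ℝ) - 1) * n.choose k + k * kstBound n (k + 1) t) :
    e ≤ kstBound n (k + 1) t := by
  have hF := kstBound_succ hn k t
  set δ : ℝ := 1 / (t : ℝ) ^ k
  set u := (n : ℝ) ^ δ
  have hδ : 0 < δ := by positivity
  have hu0 : 0 < u := by positivity
  -- For small `n^δ` the trivial bound `C(n, k+1)` suffices; otherwise the loss `(t-1) C(n, k)`
  -- from Jensen's inequality is at most the target.
  by_cases hu : u ≤ 2 * (k + 1)
  · calc e ≤ (n : ℝ) ^ (k + 1) / (k + 1).factorial :=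
          hchoose.trans (Nat.choose_le_pow_div _ _)
      _ ≤ kstBound n (k + 1) t := by
          rw [hF, Nat.factorial_succ, div_le_div_iff₀ (by positivity) (by positivity)]
          push_cast
          have := mul_le_mul_of_nonneg_left hu
            (by positivity : (0 : ℝ) ≤ (n : ℝ) ^ (k + 1) * k.factorial)
          nlinarith
  · push Not at hu
    have hδt : δ * t ≤ 1 := by
      rw [div_mul_eq_mul_div, one_mul, div_le_one (by positivity)]
      exact le_self_pow₀ (by exact_mod_cast Nat.one_le_iff_ne_zero.2 ht) (by omega)
    have htu : ((t : ℝ) - 1) * u ≤ n := by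
      have := sub_one_le_rpow_one_sub (Nat.cast_nonneg n) hδ hδt (by linarith)
      rwa [Real.rpow_sub (by positivity), Real.rpow_one, le_div_iff₀ hu0] at this
    have hlow : ((t : ℝ) - 1) * n.choose k ≤ kstBound n (k + 1) t := by
      have ht1 : (0 : ℝ) ≤ t - 1 := by
        have : (1 : ℝ) ≤ t := by exact_mod_cast Nat.one_le_iff_ne_zero.2 ht
        linarith
      calc ((t : ℝ) - 1) * n.choose k ≤ ((t : ℝ) - 1) * ((n : ℝ) ^ k / k.factorial) := by
            gcongr; exact Nat.choose_le_pow_div _ _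
        _ ≤ kstBound n (k + 1) t := by
            rw [hF, mul_div_assoc', div_le_div_iff₀ (by positivity) (by positivity)]
            calc ((t : ℝ) - 1) * (n : ℝ) ^ k * (u * k.factorial)
                = ((t - 1) * u) * ((n : ℝ) ^ k * k.factorial) := by ring
              _ ≤ n * ((n : ℝ) ^ k * k.factorial) := by gcongr
              _ ≤ 2 * (n : ℝ) ^ (k + 1) * k.factorial := by
                  rw [pow_succ]
                  nlinarith [(by positivity : (0 : ℝ) ≤ n * ((n : ℝ) ^ k * k.factorial))]
    have : (k + 1) * e ≤ (k + 1) * kstBound n (k + 1) t := by linarith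
    exact le_of_mul_le_mul_left this (by positivity)

/-- The factor `(2k)^(t-1)` is slack that lets the bound `t - 1` of the case `k = 1` feed the
same step. -/
lemma card_le_kstBound_succ {n k t : ℕ} (hk : 1 ≤ k) (ht : t ≠ 0) {E : Finset (Finset (Fin n))}
    (hE : ∀ e ∈ E, #e = k + 1) (hc : ¬ HasNonpartiteCopy n (k + 1) t E)
    (ih : ∀ H : Finset (Finset (Fin n)), (∀ S ∈ H, #S = k) → ¬ HasNonpartiteCopy n k t H →
      (#H : ℝ) ≤ (2 * k) ^ (t - 1) * kstBound n k t) :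
    (#E : ℝ) ≤ kstBound n (k + 1) t := by
  rcases E.eq_empty_or_nonempty with rfl | ⟨e, he⟩
  · simpa using kstBound_nonneg n (k + 1) t
  have hn : 0 < n := by
    obtain ⟨x, -⟩ := card_pos.1 (by rw [hE e he]; omega : 0 < #e)
    exact x.pos
  set B := (2 * (k : ℝ)) ^ (t - 1) * kstBound n k t
  have hB : 0 ≤ B := by have := kstBound_nonneg n k t; positivity
  have hdesc : ∑ S ∈ powersetCard k univ, ((#(linkVertices E S)).descFactorial t : ℝ) ≤
      n ^ t * B := by
    rw [← Nat.cast_sum, sum_descFactorial_card_linkVertices, Nat.cast_sum]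
    calc ∑ w : Fin t ↪ Fin n, (#(commonLink E k w) : ℝ) ≤ ∑ _w : Fin t ↪ Fin n, B :=
          sum_le_sum fun w _ => ih _ (fun S hS => (mem_powersetCard.1 (mem_filter.1 hS).1).2)
            (not_hasNonpartiteCopy_commonLink hc w)
      _ = n.descFactorial t * B := by simp [Fintype.card_embedding_eq]
      _ ≤ n ^ t * B := by gcongr; exact_mod_cast Nat.descFactorial_le_pow n t
  have hY : 0 ≤ k * kstBound n (k + 1) t := by
    have := kstBound_nonneg n (k + 1) t; positivity
  have hlink := sum_le_of_sum_descFactorial_le (powersetCard k univ)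
    (fun S => #(linkVertices E S)) ht hY
    ((mul_le_mul_of_nonneg_left hdesc (by positivity)).trans
      (by simpa using choose_pow_mul_kstBound_le hn hk ht))
  rw [← Nat.cast_sum, sum_card_linkVertices hE, card_powersetCard, card_univ,
    Fintype.card_fin] at hlink
  refine le_kstBound_of_le_choose hn hk ht ?_ (by exact_mod_cast hlink)
  calc (#E : ℝ) ≤ #(powersetCard (k + 1) (univ : Finset (Fin n))) := by
        exact_mod_cast card_le_card fun e he => mem_powersetCard.2 ⟨subset_univ e, hE e he⟩
    _ = n.choose (k + 1) := by simp

lemma card_le_kstBound {n k t : ℕ} (hk : 2 ≤ k) (ht : t ≠ 0) {E : Finset (Finset (Fin n))}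
    (hE : ∀ e ∈ E, #e = k) (hc : ¬ HasNonpartiteCopy n k t E) :
    (#E : ℝ) ≤ kstBound n k t := by
  induction k, hk using Nat.le_induction generalizing E with
  | base =>
    refine card_le_kstBound_succ le_rfl ht hE hc fun H hH hcH => ?_
    have hlt : #H < 2 ^ (t - 1) * 2 := by
      rw [pow_sub_one_mul ht]
      exact (card_lt_of_not_hasNonpartiteCopy_one hH hcH).trans Nat.lt_two_pow_self
    simpa [kstBound] using (Nat.cast_le (α := ℝ)).2 hlt.le
  | succ k hk ih =>
    refine card_le_kstBound_succ (by omega) ht hE hc fun H hH hcH => (ih hH hcH).trans ?_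
    refine le_mul_of_one_le_left (kstBound_nonneg n k t) (one_le_pow₀ ?_)
    have : (2 : ℝ) ≤ k := by exact_mod_cast hk
    linarith

lemma exists_card_eq_exNonpartite (n k : ℕ) {t : ℕ} (ht : t ≠ 0) :
    ∃ E : Finset (Finset (Fin n)), (∀ e ∈ E, #e = k) ∧ ¬ HasNonpartiteCopy n k t E ∧
      exNonpartite n k t = #E := by
  refine Nat.sSup_mem (s := {c | ∃ E : Finset (Finset (Fin n)), (∀ e ∈ E, e.card = k) ∧
    ¬ HasNonpartiteCopy n k t E ∧ c = E.card}) ⟨0, ∅, by simp, ?_, by simp⟩ ⟨2 ^ n, ?_⟩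
  · rintro ⟨v, -, hv⟩
    simpa using hv fun _ => ⟨0, Nat.pos_of_ne_zero ht⟩
  · rintro c ⟨E, -, -, rfl⟩
    simpa using card_le_univ E

theorem stmt6_general (n k t : ℕ) (ht : 1 ≤ t) :
    (2 ≤ k → (exNonpartite n k t : ℝ) ≤
      2 * (n : ℝ) ^ ((k : ℝ) - 1 / (t : ℝ) ^ (k - 1)) / (Nat.factorial (k - 1) : ℝ)) ∧
    (k = 1 → exNonpartite n k t ≤ t - 1) := by
  have ht0 : t ≠ 0 := by omega
  obtain ⟨E, hE, hc, hex⟩ := exists_card_eq_exNonpartite n k ht0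
  refine ⟨fun hk => hex ▸ card_le_kstBound hk ht0 hE hc, ?_⟩
  rintro rfl
  exact hex ▸ Nat.le_sub_one_of_lt (card_lt_of_not_hasNonpartiteCopy_one hE hc)

/-- Kővári–Sós–Turán / Erdős bound for non-partite extremal numbers. -/
theorem stmt6 (n k t : ℕ) (hk : 1 ≤ k) (ht : 1 ≤ t) :
    (2 ≤ k → (exNonpartite n k t : ℝ) ≤
      2 * (n : ℝ) ^ ((k : ℝ) - 1 / (t : ℝ) ^ (k - 1)) / (Nat.factorial (k - 1) : ℝ)) ∧
    (k = 1 → exNonpartite n k t ≤ t - 1) :=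
  stmt6_general n k t ht
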